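/- Let A be a real n × n matrix and let C ≥ 0 be a real number such that ‖A·w‖_◦ ≤ C·‖w‖_◦ for every vector w ∈ {0,1}^n. Then for every vector v ∈ ℝ^n each of whose entries lies in {0} ∪ [1/2, 1], we have ‖A·v‖_◦ ≤ 2·C·‖v‖_◦. -/

import Mathlib

open MeasureTheory

/-- The `‖·‖_◦` norm: `‖v‖_◦ = ∫₀^∞ √(#{i : |v_i| ≥ x}) dx`. -/
noncomputable def circNorm {n : ℕ} (v : Fin n → ℝ) : ℝ :=
  ∫ x in Set.Ioi (0 : ℝ),
    Real.sqrt ((Finset.univ.filter (fun i : Fin n => x ≤ |v i|)).card : ℝ)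

/-!
If `|v|` is sorted decreasingly as `g₀ ≥ g₁ ≥ ⋯`, the layer-cake integral defining `‖v‖_◦`
becomes `∑ₖ (√(k+1) - √k) gₖ`. The weights `√(k+1) - √k` decrease, so by the rearrangement
inequality the same sum taken in any other order is at most `‖v‖_◦`; this makes `‖·‖_◦` a norm,
monotone in `|v|`. For `0 ≤ v ≤ M`, splitting off `t · 1_{supp v}` with `t` the least nonzero
entry of `v` and inducting on the size of the support gives `‖A v‖_◦ ≤ C M ‖1_{supp v}‖_◦`.
When the nonzero entries lie in `[1/2, 1]`, moreover `‖1_{supp v}‖_◦ ≤ 2 ‖v‖_◦`.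
-/

open Finset

noncomputable def sqrtGap (k : ℕ) : ℝ := √((k : ℝ) + 1) - √(k : ℝ)

lemma sqrtGap_eq_inv (k : ℕ) : sqrtGap k = (√((k : ℝ) + 1) + √(k : ℝ))⁻¹ := by
  refine eq_inv_of_mul_eq_one_left ?_
  rw [sqrtGap]
  ring_nf
  rw [Real.sq_sqrt (by positivity), Real.sq_sqrt (by positivity)]
  ring

lemma sqrtGap_nonneg (k : ℕ) : 0 ≤ sqrtGap k := by
  rw [sqrtGap_eq_inv]; positivity

lemma sqrtGap_antitone : Antitone sqrtGap := by
  intro k l hkl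
  rw [sqrtGap_eq_inv, sqrtGap_eq_inv]
  have hk : (k : ℝ) ≤ l := by exact_mod_cast hkl
  gcongr

lemma sum_range_sqrtGap (m : ℕ) : ∑ k ∈ range m, sqrtGap k = √(m : ℝ) := by
  simpa [sqrtGap] using Finset.sum_range_sub (fun k : ℕ => √(k : ℝ)) m

lemma le_iff_lt_card_filter_of_antitone {α : Type*} [LinearOrder α] {n : ℕ} {g : Fin n → α}
    (hg : Antitone g) (x : α) (k : Fin n) : x ≤ g k ↔ (k : ℕ) < #{j | x ≤ g j} := by
  constructor
  · intro hk
    have hsub : Iic k ⊆ ({j | x ≤ g j} : Finset (Fin n)) := fun j hj =>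
      mem_filter.2 ⟨mem_univ j, hk.trans (hg (mem_Iic.1 hj))⟩
    simpa using card_le_card hsub
  · intro hk
    by_contra hxk
    have hsub : ({j | x ≤ g j} : Finset (Fin n)) ⊆ Iio k := fun j hj =>
      mem_Iio.2 (lt_of_not_ge fun hkj => hxk ((mem_filter.1 hj).2.trans (hg hkj)))
    simpa using hk.trans_le (card_le_card hsub)

lemma sqrt_card_filter_of_antitone {α : Type*} [LinearOrder α] {n : ℕ} {g : Fin n → α}
    (hg : Antitone g) (x : α) :
    √(#{j | x ≤ g j} : ℝ) = ∑ k : Fin n, if x ≤ g k then sqrtGap k else 0 := by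
  set m := #{j | x ≤ g j}
  have hm : m ≤ n := (card_filter_le _ _).trans_eq (card_fin n)
  rw [sum_congr rfl fun k _ => if_congr (le_iff_lt_card_filter_of_antitone hg x k) rfl rfl,
    ← sum_range_sqrtGap, Fin.sum_univ_eq_sum_range (fun i => if i < m then sqrtGap i else 0),
    ← sum_filter]
  congr 1
  ext k
  simp only [mem_filter, mem_range]
  omega

lemma setIntegral_Ioi_indicator_Iic {a : ℝ} (ha : 0 ≤ a) (c : ℝ) :
    ∫ x in Set.Ioi 0, (Set.Iic a).indicator (fun _ => c) x = c * a := by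
  rw [integral_indicator_const _ measurableSet_Iic, measureReal_restrict_apply measurableSet_Iic,
    Set.Iic_inter_Ioi, Real.volume_real_Ioc_of_le ha, smul_eq_mul, sub_zero, mul_comm]

lemma integrableOn_Ioi_indicator_Iic (a c : ℝ) :
    IntegrableOn ((Set.Iic a).indicator (fun _ => c)) (Set.Ioi 0) := by
  refine (integrable_indicator_iff measurableSet_Iic).2 (integrableOn_const ?_)
  rw [Measure.restrict_apply measurableSet_Iic, Set.Iic_inter_Ioi]
  exact measure_Ioc_lt_top.ne

lemma circNorm_eq_sum_sqrtGap_mul {n : ℕ} (v : Fin n → ℝ) {π : Equiv.Perm (Fin n)}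
    (hπ : Antitone fun k => |v (π k)|) :
    circNorm v = ∑ k : Fin n, sqrtGap k * |v (π k)| := by
  have hintegrand : (fun x => √(#{i | x ≤ |v i|} : ℝ))
      = fun x => ∑ k : Fin n, (Set.Iic |v (π k)|).indicator (fun _ => sqrtGap k) x := by
    funext x
    have hcard : #{i | x ≤ |v i|} = #{k | x ≤ |v (π k)|} := (card_equiv π (by simp)).symm
    rw [hcard, sqrt_card_filter_of_antitone hπ]
    simp only [Set.indicator_apply, Set.mem_Iic]
  rw [circNorm, hintegrand, integral_finsetSum _ fun k _ => integrableOn_Ioi_indicator_Iic _ _]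
  exact sum_congr rfl fun k _ => setIntegral_Ioi_indicator_Iic (abs_nonneg _) _

lemma exists_perm_antitone {α : Type*} [LinearOrder α] {n : ℕ} (f : Fin n → α) :
    ∃ π : Equiv.Perm (Fin n), Antitone (f ∘ π) :=
  ⟨Tuple.sort (OrderDual.toDual ∘ f), Tuple.monotone_sort (OrderDual.toDual ∘ f)⟩

lemma sum_sqrtGap_mul_le_circNorm {n : ℕ} (v : Fin n → ℝ) (π : Equiv.Perm (Fin n)) :
    ∑ k : Fin n, sqrtGap k * |v (π k)| ≤ circNorm v := by
  obtain ⟨τ, hτ⟩ := exists_perm_antitone fun i => |v i|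
  have hmv : Monovary (fun k : Fin n => sqrtGap k) fun k => |v (τ k)| :=
    (sqrtGap_antitone.comp_monotone Fin.val_strictMono.monotone).monovary hτ
  rw [circNorm_eq_sum_sqrtGap_mul v hτ]
  simpa using hmv.sum_smul_comp_perm_le_sum_smul (σ := π.trans τ.symm)

lemma circNorm_le_of_abs_le {n : ℕ} {u v : Fin n → ℝ} (huv : ∀ i, |u i| ≤ |v i|) :
    circNorm u ≤ circNorm v := by
  obtain ⟨τ, hτ⟩ := exists_perm_antitone fun i => |u i|
  rw [circNorm_eq_sum_sqrtGap_mul u hτ]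
  refine le_trans ?_ (sum_sqrtGap_mul_le_circNorm v τ)
  exact sum_le_sum fun k _ => mul_le_mul_of_nonneg_left (huv (τ k)) (sqrtGap_nonneg k)

lemma circNorm_add_le {n : ℕ} (u v : Fin n → ℝ) :
    circNorm (u + v) ≤ circNorm u + circNorm v := by
  obtain ⟨τ, hτ⟩ := exists_perm_antitone fun i => |(u + v) i|
  rw [circNorm_eq_sum_sqrtGap_mul _ hτ]
  calc ∑ k : Fin n, sqrtGap k * |(u + v) (τ k)|
      ≤ ∑ k : Fin n, (sqrtGap k * |u (τ k)| + sqrtGap k * |v (τ k)|) := by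
        gcongr with k
        rw [← mul_add]
        exact mul_le_mul_of_nonneg_left (abs_add_le _ _) (sqrtGap_nonneg k)
    _ ≤ circNorm u + circNorm v := by
        rw [sum_add_distrib]
        exact add_le_add (sum_sqrtGap_mul_le_circNorm u τ) (sum_sqrtGap_mul_le_circNorm v τ)

lemma circNorm_smul {n : ℕ} (c : ℝ) (v : Fin n → ℝ) : circNorm (c • v) = |c| * circNorm v := by
  obtain ⟨τ, hτ⟩ := exists_perm_antitone fun i => |v i|
  have hcτ : Antitone fun k => |(c • v) (τ k)| := by
    simpa only [Pi.smul_apply, smul_eq_mul, abs_mul, Function.comp_def] using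
      hτ.const_mul (abs_nonneg c)
  rw [circNorm_eq_sum_sqrtGap_mul _ hcτ, circNorm_eq_sum_sqrtGap_mul v hτ, mul_sum]
  refine sum_congr rfl fun k _ => ?_
  rw [Pi.smul_apply, smul_eq_mul, abs_mul]
  ring

lemma circNorm_zero {n : ℕ} : circNorm (0 : Fin n → ℝ) = 0 := by
  simpa using circNorm_smul 0 (0 : Fin n → ℝ)

open Matrix in
lemma circNorm_mulVec_le_of_nonneg_of_le {n : ℕ} {A : Matrix (Fin n) (Fin n) ℝ} {C : ℝ}
    (hC : 0 ≤ C)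
    (h : ∀ w : Fin n → ℝ, (∀ i, w i = 0 ∨ w i = 1) → circNorm (A *ᵥ w) ≤ C * circNorm w)
    {M : ℝ} {v : Fin n → ℝ} (hv : ∀ i, 0 ≤ v i ∧ v i ≤ M) :
    circNorm (A *ᵥ v) ≤ C * M * circNorm ((Function.support v).indicator 1) := by
  induction hk : (Function.support v).ncard using Nat.strong_induction_on generalizing v M with
  | _ k ih =>
  set S := Function.support v
  rcases S.eq_empty_or_nonempty with hS | hS
  · rw [hS, Set.indicator_empty', Function.support_eq_empty_iff.1 hS, mulVec_zero, circNorm_zero,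
      mul_zero]
  obtain ⟨i₀, hi₀, hmin⟩ := S.exists_min_image v S.toFinite hS
  set t := v i₀
  have ht : 0 < t := (hv i₀).1.lt_of_ne' hi₀
  have htM : t ≤ M := (hv i₀).2
  set v' := v - t • S.indicator 1
  have hv' : ∀ i, 0 ≤ v' i ∧ v' i ≤ M - t := by
    intro i
    by_cases hi : i ∈ S
    · simp [v', hi, hmin i hi, (hv i).2]
    · simp [v', hi, Function.notMem_support.1 hi, htM]
  have hsupp : Function.support v' ⊂ S := by
    refine Set.ssubset_iff_of_subset (fun i hi => ?_) |>.2 ⟨i₀, hi₀, by simp [v', hi₀, t]⟩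
    by_contra hiS
    simp [v', hiS, Function.notMem_support.1 hiS] at hi
  have hindicator : circNorm (A *ᵥ S.indicator 1) ≤ C * circNorm (S.indicator 1) :=
    h _ fun i => by by_cases hi : i ∈ S <;> simp [hi]
  have hmono : circNorm ((Function.support v').indicator 1) ≤ circNorm (S.indicator 1) :=
    circNorm_le_of_abs_le fun i => by
      by_cases hi : i ∈ Function.support v'
      · simp [hi, hsupp.subset hi]
      · simp [hi]
  have IH := ih _ (hk ▸ Set.ncard_lt_ncard hsupp S.toFinite) hv' rfl
  calc circNorm (A *ᵥ v) = circNorm (t • A *ᵥ S.indicator 1 + A *ᵥ v') := by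
        rw [← mulVec_smul, ← mulVec_add, add_sub_cancel]
    _ ≤ t * circNorm (A *ᵥ S.indicator 1) + circNorm (A *ᵥ v') :=
        (circNorm_add_le _ _).trans_eq (by rw [circNorm_smul, abs_of_pos ht])
    _ ≤ t * (C * circNorm (S.indicator 1)) + C * (M - t) * circNorm (S.indicator 1) := by
        gcongr
        exact IH.trans (mul_le_mul_of_nonneg_left hmono (mul_nonneg hC (sub_nonneg.2 htM)))
    _ = C * M * circNorm (S.indicator 1) := by ring

theorem circNorm_matrix_bound_halfOne {n : ℕ} (A : Matrix (Fin n) (Fin n) ℝ)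
    (C : ℝ) (hC : 0 ≤ C)
    (h : ∀ w : Fin n → ℝ, (∀ i, w i = 0 ∨ w i = 1) →
      circNorm (A.mulVec w) ≤ C * circNorm w) :
    ∀ v : Fin n → ℝ, (∀ i, v i = 0 ∨ (1 / 2 ≤ v i ∧ v i ≤ 1)) →
      circNorm (A.mulVec v) ≤ 2 * C * circNorm v := by
  intro v hv
  set S := Function.support v
  have hv01 : ∀ i, 0 ≤ v i ∧ v i ≤ 1 := fun i => by
    rcases hv i with h0 | ⟨hlo, hhi⟩
    · simp [h0]
    · exact ⟨by linarith, hhi⟩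
  have hS : circNorm (S.indicator 1) ≤ 2 * circNorm v := by
    have hhalf : circNorm ((1 / 2 : ℝ) • S.indicator 1) ≤ circNorm v :=
      circNorm_le_of_abs_le fun i => by
        rcases hv i with h0 | ⟨hlo, hhi⟩
        · simp [S, h0]
        · have hi : i ∈ S := by simp [S]; linarith
          simpa [hi, abs_of_pos (by linarith : (0 : ℝ) < v i)] using hlo
    rw [circNorm_smul, abs_of_pos (by norm_num)] at hhalf
    linarith
  calc circNorm (A.mulVec v) ≤ C * 1 * circNorm (S.indicator 1) :=
        circNorm_mulVec_le_of_nonneg_of_le hC h hv01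
    _ ≤ 2 * C * circNorm v := by linarith [mul_le_mul_of_nonneg_left hS hC]
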